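/- arXiv:2105.00140 — 7 statements merged into one kernel-verified Lean document; each statement's English description precedes it below -/
import Mathlib

section
/- Let d be a positive integer, q a prime power with q ≡ 1 (mod d), ω a primitive root of F_q, C the index-d subgroup of F_q^*, C_i := ω^i C for i = 0,...,d-1, and let f be an index-d first-order cyclotomic permutation of F_q given by f(0)=0 and f(x) = a_i x for x ∈ C_i. Let ψ ∈ Sym({0,...,d-1}) be the permutation with f(C_i) = C_{ψ(i)}, and for each cycle ζ of ψ set π(ζ) := Π_{i ∈ supp(ζ)} a_i. Then for every cycle ζ of ψ, the element π(ζ) lies in C. -/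
private lemma zpow_sum_aux {G : Type*} [CommGroup G] (ω : G) {ι : Type*}
    (s : Finset ι) (h : ι → ℤ) : ω ^ (∑ j ∈ s, h j) = ∏ j ∈ s, ω ^ h j := by
  induction s using Finset.cons_induction with
  | empty => simp
  | cons x s hx ih => rw [Finset.sum_cons, Finset.prod_cons, zpow_add, ih]


/-- For an index-`d` first-order cyclotomic permutation `f` of a finite field `F`
(`f 0 = 0`, `f x = a_i * x` on the coset `C_i = ω^i C` of the index-`d` subgroup
`C` of `Fˣ`), with induced coset permutation `ψ`, the product `π(ζ)` of the
multipliers along any cycle `ζ` of `ψ` lies in `C`. -/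
theorem stmt3 {F : Type*} [Field F] [Fintype F] [DecidableEq F]
    (d : ℕ) [NeZero d] (hdvd : d ∣ Fintype.card F - 1)
    (ω : Fˣ) (hω : ∀ x : Fˣ, x ∈ Subgroup.zpowers ω)
    (a : ZMod d → F)
    (f : F → F) (hf0 : f 0 = 0)
    (hf : ∀ e : ℤ, f ((ω ^ e : Fˣ) : F) = a ((e : ZMod d)) * ((ω ^ e : Fˣ) : F))
    (hbij : Function.Bijective f)
    (ψ : Equiv.Perm (ZMod d))
    (hψ : ∀ e : ℤ, ∃ c : ℤ, f ((ω ^ e : Fˣ) : F) = ((ω ^ c : Fˣ) : F) ∧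
      (c : ZMod d) = ψ ((e : ZMod d))) :
    ∀ i : ZMod d, ∃ u ∈ Subgroup.zpowers (ω ^ d),
      (∏ j ∈ Finset.univ.filter (fun j => ψ.SameCycle i j), a j) = ((u : Fˣ) : F) := by
  have key : ∀ i : ZMod d, ∃ m : ℤ, a i = ((ω ^ m : Fˣ) : F) ∧ (m : ZMod d) = ψ i - i := by
    intro i
    obtain ⟨c, hc1, hc2⟩ := hψ (i.val : ℤ)
    have hi : (((i.val : ℤ)) : ZMod d) = i := by push_cast; simp [ZMod.natCast_val]
    rw [hf (i.val : ℤ), hi] at hc1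
    refine ⟨c - (i.val : ℤ), ?_, ?_⟩
    · have hne : ((ω ^ ((i.val : ℤ)) : Fˣ) : F) ≠ 0 := Units.ne_zero _
      have ha : a i = ((ω ^ c : Fˣ) : F) / ((ω ^ ((i.val : ℤ)) : Fˣ) : F) := by
        rw [eq_div_iff hne]; exact hc1
      rw [ha, zpow_sub]
      push_cast
      ring
    · push_cast
      rw [hc2]
      simp [hi]
  choose g hg1 hg2 using key
  intro i
  set S := Finset.univ.filter (fun j => ψ.SameCycle i j) with hS
  have hsum0 : ((∑ j ∈ S, g j : ℤ) : ZMod d) = 0 := by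
    push_cast
    rw [Finset.sum_congr rfl (fun j _ => hg2 j), Finset.sum_sub_distrib]
    have h2 : ∑ j ∈ S, ψ j = ∑ j ∈ S, j := by
      refine Finset.sum_equiv ψ (fun j => ?_) (fun j _ => rfl)
      simp [hS, Equiv.Perm.sameCycle_apply_right]
    rw [h2, sub_self]
  obtain ⟨k, hk⟩ := (ZMod.intCast_zmod_eq_zero_iff_dvd _ d).mp hsum0
  refine ⟨(ω ^ d) ^ k, ⟨k, rfl⟩, ?_⟩
  have hprod : ∏ j ∈ S, a j = ((ω ^ (∑ j ∈ S, g j) : Fˣ) : F) := by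
    rw [zpow_sum_aux]
    rw [show ((∏ j ∈ S, ω ^ g j : Fˣ) : F) = ∏ j ∈ S, ((ω ^ g j : Fˣ) : F) from map_prod (Units.coeHom F) _ _]
    exact Finset.prod_congr rfl (fun j _ => hg1 j)
  rw [hprod, hk]
  congr 1
  rw [← zpow_natCast ω d, ← zpow_mul]
end

section
/- With the hypotheses of the previous setup (f an index-d first-order cyclotomic permutation of F_q with induced coset permutation ψ and cycle products π(ζ) ∈ C), every x ∈ C_i with i on a cycle ζ of ψ has cycle length under f equal to ℓ(ζ) · ord(π(ζ)), where ℓ(ζ) is the length of ζ and ord denotes multiplicative order in F_q^*. Consequently, on the union U(ζ) = ⋃_{i ∈ supp(ζ)} C_i, the permutation f decomposes into exactly (q-1)/(d·ord(π(ζ))) disjoint cycles, each of length ℓ(ζ)·ord(π(ζ)). -/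
/-!
Let `κ u ∈ ZMod d` be the index of the coset `C_i` containing a unit `u`, so that on units
`f u = a (κ u) * u` and `κ (f u) = ψ (κ u)`. Iterating, `f^[n] u = (∏_{k<n} a (ψ^k (κ u))) * u`,
so `u` is `n`-periodic iff `ψ^n` fixes `κ u` and this product is `1`. The first condition
says `n = ℓ(ζ) m`, and then the product is `π(ζ)^m`; hence the minimal period is
`ℓ(ζ) · ord π(ζ)`. The union `U(ζ)` of the `ℓ(ζ)` cosets on `ζ` has `ℓ(ζ) (q-1)/d` elements
and is `f`-invariant, so it is the disjoint union of `(q-1)/(d · ord π(ζ))` orbits of that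
common length.
-/

open Finset Function

namespace Function

variable {α β : Type*} {f : α → α} {x y : α}

theorem Semiconj.minimalPeriod_eq {φ : α → β} {fb : β → β} (hφ : Injective φ)
    (h : Semiconj φ f fb) (x : α) : minimalPeriod fb (φ x) = minimalPeriod f x :=
  minimalPeriod_eq_minimalPeriod_iff.mpr fun n => by
    rw [IsPeriodicPt, IsFixedPt, ← (h.iterate_right n) x, hφ.eq_iff]; rfl

theorem ncard_range_iterate (hx : x ∈ periodicPts f) :
    (Set.range (f^[·] x)).ncard = minimalPeriod f x := by
  have hrange : Set.range (f^[·] x) = (f^[·] x) '' Set.Iio (minimalPeriod f x) := by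
    refine (Set.image_subset_range _ _).antisymm' ?_
    rintro _ ⟨n, rfl⟩
    exact ⟨n % minimalPeriod f x, Nat.mod_lt _ (minimalPeriod_pos_of_mem_periodicPts hx),
      iterate_mod_minimalPeriod_eq⟩
  rw [hrange, iterate_injOn_Iio_minimalPeriod.ncard_image, Set.ncard_Iio_nat]

theorem range_iterate_eq_of_mem (hx : x ∈ periodicPts f) (hy : y ∈ Set.range (f^[·] x)) :
    Set.range (f^[·] y) = Set.range (f^[·] x) := by
  obtain ⟨n, rfl⟩ := hy
  have hn : f^[n] x ∈ periodicPts f := minimalPeriod_pos_iff_mem_periodicPts.mp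
    (minimalPeriod_apply_iterate hx n ▸ minimalPeriod_pos_of_mem_periodicPts hx)
  ext z
  rw [Set.mem_range, Set.mem_range, ← mem_periodicOrbit_iff hx, ← mem_periodicOrbit_iff hn,
    periodicOrbit_apply_iterate_eq hx]

theorem ncard_image_range_iterate_mul {s : Set α} (hs : s.Finite) (hmaps : Set.MapsTo f s s)
    {N : ℕ} (hN : 0 < N) (hper : ∀ x ∈ s, minimalPeriod f x = N) :
    ((fun x => Set.range (f^[·] x)) '' s).ncard * N = s.ncard := by
  set orbits := (fun x => Set.range (f^[·] x)) '' s
  have hpts : ∀ x ∈ s, x ∈ periodicPts f := fun x hx =>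
    minimalPeriod_pos_iff_mem_periodicPts.mp (hper x hx ▸ hN)
  have hcover : s = ⋃ S ∈ orbits, id S := by
    ext z
    simp only [orbits, Set.mem_iUnion, Set.mem_image, id, exists_prop]
    constructor
    · exact fun hz => ⟨_, ⟨z, hz, rfl⟩, 0, rfl⟩
    · rintro ⟨_, ⟨x, hx, rfl⟩, n, rfl⟩
      exact hmaps.iterate n hx
  have hdisj : orbits.PairwiseDisjoint id := by
    rintro _ ⟨x, hx, rfl⟩ _ ⟨y, hy, rfl⟩ hne
    exact Set.disjoint_left.mpr fun z hzx hzy => hne <|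
      (range_iterate_eq_of_mem (hpts x hx) hzx).symm.trans (range_iterate_eq_of_mem (hpts y hy) hzy)
  have hfin : ∀ S ∈ orbits, (id S).Finite := fun S hS =>
    hs.subset (hcover ▸ Set.subset_biUnion_of_mem hS)
  rw [hcover, (hs.image _).ncard_biUnion hfin hdisj, ← finsum_one, finsum_mem_mul]
  refine finsum_mem_congr rfl fun S hS => ?_
  obtain ⟨x, hx, rfl⟩ := hS
  rw [one_mul, id, ncard_range_iterate (hpts x hx), hper x hx]

end Function

namespace Equiv.Perm

variable {ι M : Type*} (ψ : Perm ι) (i : ι)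

theorem minimalPeriod_pos [Finite ι] : 0 < minimalPeriod ψ i :=
  IsPeriodicPt.minimalPeriod_pos (orderOf_pos ψ) <| by
    rw [IsPeriodicPt, IsFixedPt, iterate_eq_pow, pow_orderOf_eq_one, one_apply]

theorem injOn_pow_apply_range_minimalPeriod :
    Set.InjOn (fun k => (ψ ^ k) i) (range (minimalPeriod ψ i)) := by
  simpa only [coe_range, ← iterate_eq_pow] using iterate_injOn_Iio_minimalPeriod (f := ψ) (x := i)

variable [Fintype ι] [DecidableEq ι]

theorem filter_sameCycle_eq_image :
    ({j | ψ.SameCycle i j} : Finset ι) = (range (minimalPeriod ψ i)).image fun k => (ψ ^ k) i := by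
  ext j
  simp only [mem_filter, mem_univ, true_and, mem_image, mem_range]
  constructor
  · intro h
    obtain ⟨n, rfl⟩ := h.exists_nat_pow_eq
    refine ⟨n % minimalPeriod ψ i, Nat.mod_lt _ (minimalPeriod_pos ψ i), ?_⟩
    simp only [← iterate_eq_pow, iterate_mod_minimalPeriod_eq]
  · rintro ⟨k, -, rfl⟩
    exact ⟨k, by rw [zpow_natCast]⟩

theorem card_filter_sameCycle : #{j | ψ.SameCycle i j} = minimalPeriod ψ i := by
  rw [filter_sameCycle_eq_image, card_image_of_injOn (injOn_pow_apply_range_minimalPeriod ψ i),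
    card_range]

variable [CommMonoid M] (a : ι → M)

theorem prod_filter_sameCycle :
    ∏ j ∈ {j | ψ.SameCycle i j}, a j = ∏ k ∈ range (minimalPeriod ψ i), a ((ψ ^ k) i) := by
  rw [filter_sameCycle_eq_image, prod_image (injOn_pow_apply_range_minimalPeriod ψ i)]

theorem prod_range_minimalPeriod_mul (m : ℕ) :
    ∏ k ∈ range (minimalPeriod ψ i * m), a ((ψ ^ k) i) =
      (∏ j ∈ {j | ψ.SameCycle i j}, a j) ^ m := by
  induction m with
  | zero => simp
  | succ m ih =>
    rw [Nat.mul_succ, prod_range_add, ih, pow_succ, prod_filter_sameCycle]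
    refine congrArg _ (prod_congr rfl fun k _ => ?_)
    rw [add_comm, pow_add, mul_apply, ← iterate_eq_pow ψ (_ * m),
      (isPeriodicPt_minimalPeriod ψ i).mul_const m]

theorem pow_apply_eq_self_and_prod_range_eq_one_iff (n : ℕ) :
    (ψ ^ n) i = i ∧ ∏ k ∈ range n, a ((ψ ^ k) i) = 1 ↔
      minimalPeriod ψ i * orderOf (∏ j ∈ {j | ψ.SameCycle i j}, a j) ∣ n := by
  rw [← iterate_eq_pow]
  change IsPeriodicPt ψ n i ∧ _ ↔ _
  rw [isPeriodicPt_iff_minimalPeriod_dvd]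
  constructor
  · rintro ⟨⟨m, rfl⟩, hprod⟩
    rw [prod_range_minimalPeriod_mul] at hprod
    exact mul_dvd_mul_left _ (orderOf_dvd_of_pow_eq_one hprod)
  · rintro ⟨m, rfl⟩
    rw [mul_assoc, prod_range_minimalPeriod_mul, pow_mul, pow_orderOf_eq_one, one_pow]
    exact ⟨dvd_mul_right _ _, rfl⟩

end Equiv.Perm

theorem MonoidHom.ncard_preimage_mul_card {G M : Type*} [Group G] [Finite G] [Group M]
    (φ : G →* M) (hφ : Surjective φ) (s : Set M) :
    (φ ⁻¹' s).ncard * Nat.card M = s.ncard * Nat.card G := by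
  classical
  have : Finite M := Finite.of_surjective φ hφ
  cases nonempty_fintype G
  cases nonempty_fintype M
  have hsum (t : Set M) : (φ ⁻¹' t).ncard = t.ncard * #{x | φ x = 1} := by
    rw [Set.ncard_eq_toFinset_card', Set.ncard_eq_toFinset_card',
      card_eq_sum_card_fiberwise (f := φ) (t := t.toFinset) (fun x hx => by simpa using hx),
      sum_const_nat fun m hm => ?_]
    rw [← card_fiber_eq_of_mem_range φ (hφ m) ⟨1, map_one φ⟩]
    congr 1
    ext x
    simp only [mem_filter, mem_univ, true_and, Set.mem_toFinset, Set.mem_preimage] at hm ⊢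
    exact ⟨And.right, fun hx => ⟨hx ▸ hm, hx⟩⟩
  have huniv := hsum Set.univ
  rw [Set.preimage_univ, Set.ncard_univ, Set.ncard_univ] at huniv
  rw [hsum, huniv, mul_comm (Nat.card M), mul_assoc]

theorem exists_monoidHom_zpow_eq_ofAdd {G : Type*} [Group G] {ω : G}
    (hω : ∀ x, x ∈ Subgroup.zpowers ω) {d : ℕ} (hd : d ∣ orderOf ω) :
    ∃ κ : G →* Multiplicative (ZMod d), ∀ e : ℤ, κ (ω ^ e) = Multiplicative.ofAdd (e : ZMod d) := by
  have hord : orderOf (Multiplicative.ofAdd (1 : ZMod d)) ∣ orderOf ω := by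
    rwa [orderOf_ofAdd_eq_addOrderOf, ZMod.addOrderOf_one]
  refine ⟨monoidHomOfForallMemZpowers hω hord, fun e => ?_⟩
  rw [map_zpow, monoidHomOfForallMemZpowers_apply_gen, ← ofAdd_zsmul, zsmul_one]

namespace CyclotomicMapping

theorem mapsTo_image_sameCycle {G X ι : Type*} {κ : G → ι} {ψ : Equiv.Perm ι} {g : G → G}
    {φ : G → X} {f : X → X} (hφ : Semiconj φ g f) (hκ : Semiconj κ g ψ) (i : ι) :
    Set.MapsTo f (φ '' {x | ψ.SameCycle i (κ x)}) (φ '' {x | ψ.SameCycle i (κ x)}) := by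
  rintro _ ⟨x, hx, rfl⟩
  refine ⟨g x, ?_, hφ x⟩
  show ψ.SameCycle i (κ (g x))
  rw [hκ x]
  exact Equiv.Perm.sameCycle_apply_right.mpr hx

section

variable {G ι : Type*} [CancelCommMonoid G] {κ : G → ι} {ψ : Equiv.Perm ι} {a : ι → G} {g : G → G}

theorem iterate_eq (hg : ∀ x, g x = a (κ x) * x) (hκ : Semiconj κ g ψ) (n : ℕ) (x : G) :
    g^[n] x = (∏ k ∈ range n, a ((ψ ^ k) (κ x))) * x := by
  induction n with
  | zero => simp
  | succ n ih =>
    rw [iterate_succ_apply', hg, hκ.iterate_right n x, ih, Equiv.Perm.iterate_eq_pow,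
      prod_range_succ, ← mul_assoc, mul_comm (a _)]

theorem isPeriodicPt_iff (hg : ∀ x, g x = a (κ x) * x) (hκ : Semiconj κ g ψ) (n : ℕ) (x : G) :
    IsPeriodicPt g n x ↔ (ψ ^ n) (κ x) = κ x ∧ ∏ k ∈ range n, a ((ψ ^ k) (κ x)) = 1 := by
  have hprod : IsPeriodicPt g n x ↔ ∏ k ∈ range n, a ((ψ ^ k) (κ x)) = 1 := by
    rw [IsPeriodicPt, IsFixedPt, iterate_eq hg hκ, mul_eq_right]
  refine ⟨fun h => ⟨?_, hprod.mp h⟩, fun h => hprod.mpr h.2⟩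
  rw [← Equiv.Perm.iterate_eq_pow, ← hκ.iterate_right n x, h.eq]

theorem minimalPeriod_eq [Fintype ι] [DecidableEq ι] (hg : ∀ x, g x = a (κ x) * x)
    (hκ : Semiconj κ g ψ) {x : G} {i : ι} (hx : ψ.SameCycle i (κ x)) :
    minimalPeriod g x = #{j | ψ.SameCycle i j} * orderOf (∏ j ∈ {j | ψ.SameCycle i j}, a j) := by
  have hcycle : (univ.filter fun j => ψ.SameCycle i j) = univ.filter fun j => ψ.SameCycle (κ x) j :=
    filter_congr fun j _ => ⟨hx.symm.trans, hx.trans⟩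
  rw [hcycle, Equiv.Perm.card_filter_sameCycle, ← Nat.dvd_right_iff_eq]
  intro n
  rw [← isPeriodicPt_iff_minimalPeriod_dvd, isPeriodicPt_iff hg hκ,
    Equiv.Perm.pow_apply_eq_self_and_prod_range_eq_one_iff]

end

variable {M : Type*} [Monoid M] {d : ℕ} {ω : Mˣ} {κ : Mˣ →* Multiplicative (ZMod d)}
  {a : ZMod d → Mˣ} {f : M → M} {ψ : Equiv.Perm (ZMod d)}

theorem semiconj_val (hω : ∀ x : Mˣ, x ∈ Subgroup.zpowers ω)
    (hκ : ∀ e : ℤ, κ (ω ^ e) = Multiplicative.ofAdd (e : ZMod d))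
    (hf : ∀ e : ℤ, f ((ω ^ e : Mˣ) : M) = (a (e : ZMod d) : M) * ((ω ^ e : Mˣ) : M)) :
    Semiconj Units.val (fun u => a (κ u).toAdd * u) f := by
  intro u
  obtain ⟨e, rfl⟩ := Subgroup.mem_zpowers_iff.mp (hω u)
  change ((a (κ (ω ^ e)).toAdd * ω ^ e : Mˣ) : M) = _
  rw [hf, hκ, toAdd_ofAdd, Units.val_mul]

theorem semiconj_label (hω : ∀ x : Mˣ, x ∈ Subgroup.zpowers ω)
    (hκ : ∀ e : ℤ, κ (ω ^ e) = Multiplicative.ofAdd (e : ZMod d))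
    (hf : ∀ e : ℤ, f ((ω ^ e : Mˣ) : M) = (a (e : ZMod d) : M) * ((ω ^ e : Mˣ) : M))
    (hψ : ∀ e : ℤ, ∃ c : ℤ, f ((ω ^ e : Mˣ) : M) = ((ω ^ c : Mˣ) : M) ∧
      (c : ZMod d) = ψ (e : ZMod d)) :
    Semiconj (fun u => (κ u).toAdd) (fun u => a (κ u).toAdd * u) ψ := by
  intro u
  obtain ⟨e, rfl⟩ := Subgroup.mem_zpowers_iff.mp (hω u)
  obtain ⟨c, hfc, hc⟩ := hψ e
  have hstep : a (κ (ω ^ e)).toAdd * ω ^ e = ω ^ c :=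
    Units.val_injective ((semiconj_val hω hκ hf _).trans hfc)
  change (κ (a (κ (ω ^ e)).toAdd * ω ^ e)).toAdd = ψ (κ (ω ^ e)).toAdd
  rw [hstep, hκ, hκ, toAdd_ofAdd, toAdd_ofAdd, hc]

theorem setOf_range_iterate_eq_image (hω : ∀ x : Mˣ, x ∈ Subgroup.zpowers ω)
    (hκ : ∀ e : ℤ, κ (ω ^ e) = Multiplicative.ofAdd (e : ZMod d)) (i : ZMod d) :
    {S : Set M | ∃ e : ℤ, ψ.SameCycle i (e : ZMod d) ∧
        S = {y : M | ∃ n : ℕ, f^[n] ((ω ^ e : Mˣ) : M) = y}} =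
      (fun x => Set.range (f^[·] x)) '' (Units.val '' {u | ψ.SameCycle i (κ u).toAdd}) := by
  rw [Set.image_image]
  ext S
  constructor
  · rintro ⟨e, he, rfl⟩
    exact ⟨ω ^ e, by simpa [hκ] using he, rfl⟩
  · rintro ⟨u, hu, rfl⟩
    obtain ⟨e, rfl⟩ := Subgroup.mem_zpowers_iff.mp (hω u)
    exact ⟨e, by simpa [hκ] using hu, rfl⟩

theorem ncard_setOf_sameCycle_mul [Finite M] [NeZero d]
    (hκ : ∀ e : ℤ, κ (ω ^ e) = Multiplicative.ofAdd (e : ZMod d)) (i : ZMod d) :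
    {u : Mˣ | ψ.SameCycle i (κ u).toAdd}.ncard * d = #{j | ψ.SameCycle i j} * Nat.card Mˣ := by
  have hsurj : Surjective κ := fun m => ⟨ω ^ (m.toAdd.val : ℤ), by simp [hκ]⟩
  have := κ.ncard_preimage_mul_card hsurj {m | ψ.SameCycle i m.toAdd}
  rw [Nat.card_eq_fintype_card, Fintype.card_multiplicative, ZMod.card] at this
  rw [← Set.ncard_coe_finset, coe_filter_univ]
  exact this

end CyclotomicMapping

theorem stmt4_general {F : Type*} [Field F] [Fintype F]
    (d : ℕ) [NeZero d] (hdvd : d ∣ Fintype.card F - 1)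
    (ω : Fˣ) (hω : ∀ x : Fˣ, x ∈ Subgroup.zpowers ω)
    (a : ZMod d → Fˣ)
    (f : F → F)
    (hf : ∀ e : ℤ, f ((ω ^ e : Fˣ) : F) = ((a ((e : ZMod d)) : F)) * ((ω ^ e : Fˣ) : F))
    (ψ : Equiv.Perm (ZMod d))
    (hψ : ∀ e : ℤ, ∃ c : ℤ, f ((ω ^ e : Fˣ) : F) = ((ω ^ c : Fˣ) : F) ∧
      (c : ZMod d) = ψ ((e : ZMod d))) :
    ∀ i : ZMod d,
      (∀ e : ℤ, (e : ZMod d) = i →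
        Function.minimalPeriod f ((ω ^ e : Fˣ) : F)
          = (Finset.univ.filter (fun j => ψ.SameCycle i j)).card
            * orderOf (∏ j ∈ Finset.univ.filter (fun j => ψ.SameCycle i j), a j))
      ∧ {S : Set F | ∃ e : ℤ, ψ.SameCycle i ((e : ZMod d)) ∧
            S = {y : F | ∃ n : ℕ, f^[n] ((ω ^ e : Fˣ) : F) = y}}.ncard
          = (Fintype.card F - 1)
            / (d * orderOf (∏ j ∈ Finset.univ.filter (fun j => ψ.SameCycle i j), a j)) := by
  have hq : Nat.card Fˣ = Fintype.card F - 1 := by rw [Nat.card_units, Nat.card_eq_fintype_card]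
  obtain ⟨κ, hκ⟩ := exists_monoidHom_zpow_eq_ofAdd hω <|
    (orderOf_eq_card_of_forall_mem_zpowers hω).trans hq ▸ hdvd
  have hval := CyclotomicMapping.semiconj_val hω hκ hf
  have hlabel := CyclotomicMapping.semiconj_label hω hκ hf hψ
  have hperiod (i : ZMod d) (u : Fˣ) (hu : ψ.SameCycle i (κ u).toAdd) :=
    (hval.minimalPeriod_eq Units.val_injective u).trans
      (CyclotomicMapping.minimalPeriod_eq (fun _ => rfl) hlabel hu)
  intro i
  refine ⟨fun e he => hperiod i _ (by rw [hκ, toAdd_ofAdd, he]), ?_⟩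
  have hcycle : 0 < #{j | ψ.SameCycle i j} :=
    card_pos.mpr ⟨i, by simp [Equiv.Perm.SameCycle.refl]⟩
  have hcount := ncard_image_range_iterate_mul (Set.toFinite _)
    (CyclotomicMapping.mapsTo_image_sameCycle hval hlabel i) (Nat.mul_pos hcycle (orderOf_pos _))
    (by rintro _ ⟨u, hu, rfl⟩; exact hperiod i u hu)
  rw [Set.ncard_image_of_injective _ Units.val_injective] at hcount
  have hunion := CyclotomicMapping.ncard_setOf_sameCycle_mul (ψ := ψ) hκ i
  rw [hq] at hunion
  rw [CyclotomicMapping.setOf_range_iterate_eq_image hω hκ]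
  refine (Nat.div_eq_of_eq_mul_left (Nat.mul_pos (NeZero.pos d) (orderOf_pos _)) ?_).symm
  exact Nat.eq_of_mul_eq_mul_left hcycle (by rw [← hunion, ← hcount]; ring)

/-- For an index-`d` first-order cyclotomic permutation `f` of `F` with induced coset
permutation `ψ` and cycle products `π(ζ)`, every `x ∈ C_i` with `i` on a cycle `ζ` of
`ψ` has cycle length (minimal period) under `f` equal to `ℓ(ζ) · ord(π(ζ))`; and on
`U(ζ) = ⋃_{i ∈ supp ζ} C_i`, `f` decomposes into exactly `(q-1)/(d·ord(π(ζ)))`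
disjoint cycles (orbits). -/
theorem stmt4 {F : Type*} [Field F] [Fintype F] [DecidableEq F]
    (d : ℕ) [NeZero d] (hdvd : d ∣ Fintype.card F - 1)
    (ω : Fˣ) (hω : ∀ x : Fˣ, x ∈ Subgroup.zpowers ω)
    (a : ZMod d → Fˣ)
    (f : F → F) (hf0 : f 0 = 0)
    (hf : ∀ e : ℤ, f ((ω ^ e : Fˣ) : F) = ((a ((e : ZMod d)) : F)) * ((ω ^ e : Fˣ) : F))
    (hbij : Function.Bijective f)
    (ψ : Equiv.Perm (ZMod d))
    (hψ : ∀ e : ℤ, ∃ c : ℤ, f ((ω ^ e : Fˣ) : F) = ((ω ^ c : Fˣ) : F) ∧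
      (c : ZMod d) = ψ ((e : ZMod d))) :
    ∀ i : ZMod d,
      (∀ e : ℤ, (e : ZMod d) = i →
        Function.minimalPeriod f ((ω ^ e : Fˣ) : F)
          = (Finset.univ.filter (fun j => ψ.SameCycle i j)).card
            * orderOf (∏ j ∈ Finset.univ.filter (fun j => ψ.SameCycle i j), a j))
      ∧ {S : Set F | ∃ e : ℤ, ψ.SameCycle i ((e : ZMod d)) ∧
            S = {y : F | ∃ n : ℕ, f^[n] ((ω ^ e : Fˣ) : F) = y}}.ncard
          = (Fintype.card F - 1)
            / (d * orderOf (∏ j ∈ Finset.univ.filter (fun j => ψ.SameCycle i j), a j)) :=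
  stmt4_general d hdvd ω hω a f hf ψ hψ
end

section
/- If q is a power of 2 and f is a complete mapping of F_q, then both f and f + id have exactly one fixed point. In particular, F_q admits no complete mapping f such that f permutes all q elements cyclically. -/
/-- If `q` is a power of `2` (i.e. `F_q` has characteristic `2`) and `f` is a complete
mapping of `F_q`, then both `f` and `f + id` have exactly one fixed point; in
particular `F_q` admits no complete mapping permuting all `q` elements cyclically. -/
theorem stmt8 {F : Type*} [Field F] [Fintype F] [CharP F 2] (f : F → F)
    (hf : Function.Bijective f)
    (hg : Function.Bijective (fun x => f x + x)) :
    (∃! x : F, f x = x)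
    ∧ (∃! x : F, f x + x = x)
    ∧ (1 < Fintype.card F →
        ¬ (∀ x : F, Function.minimalPeriod f x = Fintype.card F)) := by
  have key : ∀ x : F, f x = x ↔ f x + x = 0 := fun x => by
    rw [← sub_eq_zero, CharTwo.sub_eq_add]
  have h1 : ∃! x : F, f x = x := by
    obtain ⟨x0, hx0, hu⟩ := hg.existsUnique 0
    exact ⟨x0, (key x0).mpr hx0, fun y hy => hu y ((key y).mp hy)⟩
  refine ⟨h1, ?_, ?_⟩
  · have key2 : ∀ x : F, f x + x = x ↔ f x = 0 := fun x => by
      constructor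
      · intro h; exact add_right_cancel (by rw [h, zero_add])
      · intro h; rw [h, zero_add]
    obtain ⟨x0, hx0, hu⟩ := hf.existsUnique 0
    exact ⟨x0, (key2 x0).mpr hx0, fun y hy => hu y ((key2 y).mp hy)⟩
  · intro hcard hall
    obtain ⟨x0, hx0, -⟩ := h1
    have h1' : Function.minimalPeriod f x0 = 1 :=
      Function.minimalPeriod_eq_one_iff_isFixedPt.mpr hx0
    rw [hall x0] at h1'
    omega
end

section
/- Let q be a prime power with q ≡ 1 (mod d) for an integer d > 1, let ω be a primitive root of F_q, let C be the index-d subgroup of F_q^* with cosets C_i = ω^i C, let o be a positive integer with o ≡ 1 (mod d), and define f : F_q → F_q by f(0) = 0, f(x) = ω x for x ∈ C_i with 0 ≤ i ≤ d−2, and f(x) = ω^o x for x ∈ C_{d−1}. Then f is a permutation of F_q with f(C_i) = C_{i+1 mod d} for all i, and f permutes F_q^* in a single (q−1)-cycle if and only if gcd(o + d − 1, q − 1) = d. -/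
/-- Let `q ≡ 1 (mod d)` with `d > 1`, `ω` a primitive root of `F_q`, `C` the index-`d`
subgroup of `F_q^*` with cosets `C_i = ω^i C`, and `o ≡ 1 (mod d)` positive. The map
`f` with `f 0 = 0`, `f x = ω x` on `C_i` for `i ≠ d-1` and `f x = ω^o x` on `C_{d-1}`
is a permutation of `F_q` mapping `C_i` onto `C_{i+1}`, and `f` permutes `F_q^*` in a
single `(q-1)`-cycle if and only if `gcd(o + d - 1, q - 1) = d`. -/
theorem stmt9 {F : Type*} [Field F] [Fintype F] [DecidableEq F]
    (d : ℕ) (hd : 1 < d) [NeZero d] (hdvd : d ∣ Fintype.card F - 1)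
    (ω : Fˣ) (hω : ∀ x : Fˣ, x ∈ Subgroup.zpowers ω)
    (o : ℕ) (ho : 0 < o) (ho1 : (o : ZMod d) = 1)
    (f : F → F) (hf0 : f 0 = 0)
    (hf1 : ∀ e : ℤ, (e : ZMod d) ≠ ((d - 1 : ℕ) : ZMod d) →
      f ((ω ^ e : Fˣ) : F) = (ω : F) * ((ω ^ e : Fˣ) : F))
    (hf2 : ∀ e : ℤ, (e : ZMod d) = ((d - 1 : ℕ) : ZMod d) →
      f ((ω ^ e : Fˣ) : F) = ((ω ^ o : Fˣ) : F) * ((ω ^ e : Fˣ) : F)) :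
    Function.Bijective f
    ∧ (∀ e : ℤ, ∃ c : ℤ, f ((ω ^ e : Fˣ) : F) = ((ω ^ c : Fˣ) : F) ∧
        (c : ZMod d) = (e : ZMod d) + 1)
    ∧ ((∀ x : F, x ≠ 0 → Function.minimalPeriod f x = Fintype.card F - 1) ↔
        Nat.gcd (o + d - 1) (Fintype.card F - 1) = d) := by
  have hd0 : (0 : ℤ) < (d : ℤ) := by omega
  set n : ℕ := Fintype.card F - 1 with hn_def
  -- order of ω
  have hcard : Fintype.card Fˣ = n := by rw [hn_def, ← Fintype.card_units]
  have hordω : orderOf ω = n := by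
    rw [orderOf_eq_card_of_forall_mem_zpowers hω, Nat.card_eq_fintype_card, hcard]
  have hn0 : 0 < n := by
    have : 1 < Fintype.card F := Fintype.one_lt_card
    omega
  have powcong : ∀ a b : ℤ, a = b → ((ω ^ a : Fˣ) : F) = ((ω ^ b : Fˣ) : F) := by
    intro a b h; rw [h]
  -- basic cast facts
  have hdm1 : ((d - 1 : ℕ) : ZMod d) = -1 := by
    have h1 : ((d - 1 : ℕ) : ZMod d) = (d : ZMod d) - 1 := by
      rw [Nat.cast_sub (by omega)]; simp
    rw [h1, ZMod.natCast_self]; ring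
  have hneg : ∀ a : ℤ, ((a : ZMod d) = -1) ↔ (d : ℤ) ∣ a + 1 := by
    intro a
    rw [show (-1 : ZMod d) = ((-1 : ℤ) : ZMod d) by push_cast; ring,
      ZMod.intCast_eq_intCast_iff, Int.modEq_iff_dvd,
      show (-1 : ℤ) - a = -(a + 1) by ring, dvd_neg]
  have hoZ : (d : ℤ) ∣ (o : ℤ) - 1 := by
    have : (((o : ℤ) - 1 : ℤ) : ZMod d) = 0 := by push_cast [ho1]; ring
    exact_mod_cast (ZMod.intCast_zmod_eq_zero_iff_dvd _ d).mp this
  -- single step lemmas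
  have step1 : ∀ e : ℤ, ((e : ZMod d) ≠ -1) →
      f ((ω ^ e : Fˣ) : F) = ((ω ^ (e + 1) : Fˣ) : F) := by
    intro e he
    rw [hf1 e (by rw [hdm1]; exact he), zpow_add, zpow_one]
    push_cast; ring
  have step2 : ∀ e : ℤ, ((e : ZMod d) = -1) →
      f ((ω ^ e : Fˣ) : F) = ((ω ^ (e + o) : Fˣ) : F) := by
    intro e he
    rw [hf2 e (by rw [hdm1]; exact he), zpow_add, zpow_natCast]
    push_cast; ring
  -- free run lemma
  have run : ∀ k : ℕ, ∀ e : ℤ, (∀ j : ℕ, j < k → (((e + j : ℤ)) : ZMod d) ≠ -1) →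
      f^[k] ((ω ^ e : Fˣ) : F) = ((ω ^ (e + k) : Fˣ) : F) := by
    intro k
    induction k with
    | zero => intro e _; simp
    | succ k ih =>
      intro e he
      rw [Function.iterate_succ_apply, step1 e (by simpa using he 0 (by omega)),
        ih (e + 1) (fun j hj => by
          have h := he (j + 1) (by omega)
          intro hcl
          apply h
          push_cast at hcl ⊢
          linear_combination hcl)]
      exact powcong _ _ (by push_cast; ring)
  -- d-step lemma
  have dstep : ∀ e : ℤ, f^[d] ((ω ^ e : Fˣ) : F) = ((ω ^ (e + o + d - 1) : Fˣ) : F) := by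
    intro e
    set r : ℤ := e % d with hr_def
    have hr0 : 0 ≤ r := Int.emod_nonneg e (by omega)
    have hrd : r < d := Int.emod_lt_of_pos e hd0
    have hre : (d : ℤ) ∣ e - r := ⟨e / d, by
      have := Int.mul_ediv_add_emod e d
      rw [hr_def]; linarith⟩
    set k1 : ℕ := (d - 1 - r).toNat with hk1_def
    have hk1 : (k1 : ℤ) = (d : ℤ) - 1 - r := Int.toNat_of_nonneg (by omega)
    have hrt : ((r.toNat : ℕ) : ℤ) = r := Int.toNat_of_nonneg hr0
    have h1 : f^[k1] ((ω ^ e : Fˣ) : F) = ((ω ^ (e + k1) : Fˣ) : F) := by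
      refine run k1 e (fun j hj => ?_)
      intro hcl
      have hdvd' := (hneg _).mp hcl
      have h2 : (d : ℤ) ∣ (r + j + 1) := by
        have heq : e + j + 1 = (e - r) + (r + j + 1) := by ring
        rw [heq] at hdvd'
        exact (dvd_add_right hre).mp hdvd'
      have hjlt : (j : ℤ) < k1 := by exact_mod_cast hj
      have := Int.le_of_dvd (by omega) h2
      omega
    have h2 : f ((ω ^ (e + k1) : Fˣ) : F) = ((ω ^ (e + k1 + o) : Fˣ) : F) := by
      refine step2 _ ?_
      rw [hneg]
      have heq : e + k1 + 1 = (e - r) + d := by rw [hk1]; ring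
      rw [heq]
      exact dvd_add hre dvd_rfl
    have h3 : f^[r.toNat] ((ω ^ (e + k1 + o) : Fˣ) : F) =
        ((ω ^ (e + k1 + o + r.toNat) : Fˣ) : F) := by
      refine run r.toNat (e + k1 + o) (fun j hj => ?_)
      intro hcl
      have hdvd' := (hneg _).mp hcl
      have h2' : (d : ℤ) ∣ ((j : ℤ) + 1) := by
        have heq : e + k1 + o + j + 1 = ((e - r) + ((o : ℤ) - 1) + d) + ((j : ℤ) + 1) := by
          rw [hk1]; ring
        rw [heq] at hdvd'
        exact (dvd_add_right (dvd_add (dvd_add hre hoZ) dvd_rfl)).mp hdvd'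
      have hjlt : (j : ℤ) < r := by
        have : (j : ℤ) < (r.toNat : ℤ) := by exact_mod_cast hj
        omega
      have := Int.le_of_dvd (by omega) h2'
      omega
    have hd_eq : d = r.toNat + (1 + k1) := by omega
    calc f^[d] ((ω ^ e : Fˣ) : F) = f^[r.toNat] (f^[1] (f^[k1] ((ω ^ e : Fˣ) : F))) := by
          conv_lhs => rw [hd_eq]
          rw [Function.iterate_add_apply, Function.iterate_add_apply]
      _ = ((ω ^ (e + o + d - 1) : Fˣ) : F) := by
          rw [h1, Function.iterate_one, h2, h3]
          exact powcong _ _ (by omega)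
  -- f^[d] is multiplication by ω^(o+d-1)
  set s : ℕ := o + d - 1 with hs_def
  have hsZ : ((s : ℕ) : ℤ) = (o : ℤ) + d - 1 := by omega
  have hf0iter : ∀ k : ℕ, f^[k] 0 = 0 := fun k => Function.IsFixedPt.iterate hf0 k
  have hunit : ∀ x : F, x ≠ 0 → ∃ e : ℤ, x = ((ω ^ e : Fˣ) : F) := by
    intro x hx
    obtain ⟨e, he⟩ := Subgroup.mem_zpowers_iff.mp (hω (Units.mk0 x hx))
    exact ⟨e, by rw [he]; rfl⟩
  have hfd : ∀ x : F, f^[d] x = ((ω ^ s : Fˣ) : F) * x := by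
    intro x
    by_cases hx : x = 0
    · rw [hx, hf0iter, mul_zero]
    · obtain ⟨e, rfl⟩ := hunit x hx
      rw [dstep]
      have h : (ω ^ (e + o + d - 1) : Fˣ) = ω ^ (s : ℤ) * ω ^ e := by
        rw [← zpow_add]; exact congrArg _ (by omega)
      rw [h, zpow_natCast]
      push_cast; ring
  -- cast equality of zpowers
  have hzeq : ∀ a b : ℤ, ((ω ^ a : Fˣ) : F) = ((ω ^ b : Fˣ) : F) ↔ (n : ℤ) ∣ a - b := by
    intro a b
    constructor
    · intro h
      have h' : ω ^ a = ω ^ b := Units.ext h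
      have : ω ^ (a - b) = 1 := by rw [zpow_sub, h', mul_inv_cancel]
      rw [← hordω]
      exact orderOf_dvd_iff_zpow_eq_one.mpr this
    · intro h
      have h0 : ω ^ (a - b) = 1 := orderOf_dvd_iff_zpow_eq_one.mp (by rw [hordω]; exact h)
      have h2 : ω ^ a = ω ^ b := by
        rw [← sub_add_cancel a b, zpow_add, h0, one_mul]
      rw [h2]
  -- Part 2 : coset shift
  have part2 : ∀ e : ℤ, ∃ c : ℤ, f ((ω ^ e : Fˣ) : F) = ((ω ^ c : Fˣ) : F) ∧
      (c : ZMod d) = (e : ZMod d) + 1 := by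
    intro e
    by_cases he : (e : ZMod d) = -1
    · exact ⟨e + o, step2 e he, by push_cast [ho1]; ring⟩
    · exact ⟨e + 1, step1 e he, by push_cast; ring⟩
  -- Part 1 : bijectivity
  have surj : Function.Surjective f := by
    intro y
    by_cases hy : y = 0
    · exact ⟨0, by rw [hf0, hy]⟩
    · obtain ⟨e, rfl⟩ := hunit y hy
      by_cases he : (((e - 1 : ℤ)) : ZMod d) = -1
      · refine ⟨((ω ^ (e - o) : Fˣ) : F), ?_⟩
        rw [step2 (e - o) ?_]
        · exact powcong _ _ (by ring)
        · rw [hneg] at he ⊢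
          have heq : e - o + 1 = (e - 1 + 1) - ((o : ℤ) - 1) := by ring
          rw [heq]
          exact dvd_sub he hoZ
      · refine ⟨((ω ^ (e - 1) : Fˣ) : F), ?_⟩
        rw [step1 (e - 1) he]
        exact powcong _ _ (by ring)
  have bij : Function.Bijective f := Finite.surjective_iff_bijective.mp surj
  refine ⟨bij, part2, ?_⟩
  -- iterate class lemma
  have iterclass : ∀ k : ℕ, ∀ e : ℤ, ∃ c : ℤ,
      f^[k] ((ω ^ e : Fˣ) : F) = ((ω ^ c : Fˣ) : F) ∧ (c : ZMod d) = (e : ZMod d) + k := by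
    intro k
    induction k with
    | zero => intro e; exact ⟨e, by simp, by simp⟩
    | succ k ih =>
      intro e
      obtain ⟨c, hc1, hc2⟩ := part2 e
      obtain ⟨c', hc'1, hc'2⟩ := ih c
      refine ⟨c', by rw [Function.iterate_succ_apply, hc1, hc'1], ?_⟩
      rw [hc'2, hc2]; push_cast; ring
  -- everything is periodic
  have hper : ∀ x : F, Function.IsPeriodicPt f (d * n) x := by
    intro x
    have h1 : f^[d * n] x = x := by
      rw [Function.iterate_mul]
      have h2 : (f^[d]) = fun y : F => ((ω ^ s : Fˣ) : F) • y := by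
        funext y; rw [hfd]; rfl
      rw [h2, smul_iterate]
      have h3 : ((ω ^ s : Fˣ) : F) ^ n = 1 := by
        have h4 : (ω ^ s) ^ n = 1 := by
          rw [← pow_mul, mul_comm, pow_mul, ← hordω, pow_orderOf_eq_one, one_pow]
        rw [← Units.val_pow_eq_pow_val, h4]; rfl
      show ((ω ^ s : Fˣ) : F) ^ n • x = x
      rw [h3]; simp
    exact h1
  -- the key computation of minimal periods
  have key : ∀ x : F, x ≠ 0 → Function.minimalPeriod f x = d * (n / Nat.gcd n s) := by
    intro x hx
    obtain ⟨e, rfl⟩ := hunit x hx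
    set m : ℕ := Function.minimalPeriod f ((ω ^ e : Fˣ) : F) with hm_def
    have hmem : ((ω ^ e : Fˣ) : F) ∈ Function.periodicPts f :=
      ⟨d * n, by positivity, hper _⟩
    have hm0 : 0 < m := Function.minimalPeriod_pos_of_mem_periodicPts hmem
    -- d ∣ m
    have hdm : d ∣ m := by
      obtain ⟨c, hc1, hc2⟩ := iterclass m e
      have hfm : f^[m] ((ω ^ e : Fˣ) : F) = ((ω ^ e : Fˣ) : F) :=
        Function.iterate_minimalPeriod
      rw [hfm] at hc1
      have hdvd' : (n : ℤ) ∣ e - c := (hzeq e c).mp hc1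
      have hdd : (d : ℤ) ∣ e - c := dvd_trans (by exact_mod_cast hdvd) hdvd'
      have hcast : (c : ZMod d) = (e : ZMod d) := by
        have hz : (((e - c : ℤ)) : ZMod d) = 0 := (ZMod.intCast_zmod_eq_zero_iff_dvd _ d).mpr hdd
        push_cast at hz
        linear_combination -hz
      rw [hcast] at hc2
      have hz2 : ((m : ℕ) : ZMod d) = 0 := by linear_combination -hc2
      exact (ZMod.natCast_eq_zero_iff m d).mp hz2
    -- minimal period of f^[d]
    have hfd_eq : (f^[d]) = fun y : F => ((ω ^ s : Fˣ) : F) • y := by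
      funext y; rw [hfd]; rfl
    have hmp_g : Function.minimalPeriod (f^[d]) ((ω ^ e : Fˣ) : F) = orderOf (ω ^ s) := by
      have hiff : ∀ k : ℕ, Function.IsPeriodicPt (f^[d]) k ((ω ^ e : Fˣ) : F) ↔
          orderOf (ω ^ s) ∣ k := by
        intro k
        rw [hfd_eq]
        unfold Function.IsPeriodicPt Function.IsFixedPt
        rw [smul_iterate]
        show ((ω ^ s : Fˣ) : F) ^ k • ((ω ^ e : Fˣ) : F) = _ ↔ _
        rw [smul_eq_mul, ← Units.val_pow_eq_pow_val, mul_left_eq_self₀]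
        constructor
        · rintro (h | h)
          · exact orderOf_dvd_iff_pow_eq_one.mpr (Units.ext h)
          · exact absurd h (by simpa using hx)
        · intro h
          left
          rw [orderOf_dvd_iff_pow_eq_one.mp h]; rfl
      apply Nat.dvd_antisymm
      · exact Function.IsPeriodicPt.minimalPeriod_dvd ((hiff _).mpr dvd_rfl)
      · exact (hiff _).mp (Function.isPeriodicPt_minimalPeriod _ _)
    have hiter_eq : Function.minimalPeriod (f^[d]) ((ω ^ e : Fˣ) : F) = m / Nat.gcd m d :=
      Function.minimalPeriod_iterate_eq_div_gcd (by omega)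
    have hord_pow : orderOf (ω ^ s) = n / Nat.gcd n s := by
      rw [orderOf_pow, hordω]
    have hgcdmd : Nat.gcd m d = d := Nat.gcd_eq_right hdm
    have hmd : m / d = n / Nat.gcd n s := by
      rw [← hord_pow, ← hmp_g, hiter_eq, hgcdmd]
    calc m = m / d * d := (Nat.div_mul_cancel hdm).symm
      _ = n / Nat.gcd n s * d := by rw [hmd]
      _ = d * (n / Nat.gcd n s) := mul_comm _ _
  have hds : d ∣ s := by
    have hdvd1 : d ∣ o - 1 := by
      have h1 : ((o - 1 : ℕ) : ZMod d) = 0 := by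
        rw [Nat.cast_sub ho, ho1]; simp
      exact (ZMod.natCast_eq_zero_iff _ d).mp h1
    obtain ⟨t, ht⟩ := hdvd1
    refine ⟨t + 1, ?_⟩
    have h2 : d * (t + 1) = d * t + d := by ring
    omega
  have hdg : d ∣ Nat.gcd n s := Nat.dvd_gcd hdvd hds
  rw [Nat.gcd_comm s n]
  constructor
  · intro hall
    have h1 : Function.minimalPeriod f (1 : F) = n := hall 1 one_ne_zero
    have h2 : n = d * (n / Nat.gcd n s) := by
      have h2' := key 1 one_ne_zero
      rw [h1] at h2'
      exact h2'
    have h3 : Nat.gcd n s * (n / Nat.gcd n s) = n := Nat.mul_div_cancel' (Nat.gcd_dvd_left n s)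
    have h4 : 0 < n / Nat.gcd n s := by
      rcases Nat.eq_zero_or_pos (n / Nat.gcd n s) with h | h
      · rw [h, mul_zero] at h3; omega
      · exact h
    have h5 : d * (n / Nat.gcd n s) = Nat.gcd n s * (n / Nat.gcd n s) := by rw [h3, ← h2]
    exact (Nat.eq_of_mul_eq_mul_right h4 h5).symm
  · intro hg x hx
    rw [key x hx, hg, Nat.mul_div_cancel' hdvd]
end

section
/- Let q be a prime power of characteristic p, let d > 1 divide q − 1, let ω be a primitive root of F_q, and let o be a positive integer. Define f : F_q → F_q by f(0)=0, f(x) = ωx if x ∉ C_{d−1} ∪ {0}, and f(x) = ω^o x if x ∈ C_{d−1}, where C_{d−1} = ω^{d−1}·{x^d : x ∈ F_q^*}. If ω^o ≠ ω, then f is not an additive map (i.e., not an endomorphism of the additive group of F_q). -/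
/-!
If `f` were additive, `f` and `x ↦ ω x` would be two additive maps agreeing outside the
cyclotomic class `C_{d-1}`. Since `C_{d-1}` and `ω C_{d-1}` are disjoint translates, `C_{d-1}` has
at most `(q - 1) / 2` elements, so the maps agree on more than half of `F_q`; their equalizer is
an additive subgroup, hence all of `F_q`, which fails at `ω^{d-1}` because `ω^o ≠ ω`.
-/

theorem AddSubgroup.eq_top_of_card_lt_two_mul_card {G : Type*} [AddGroup G] [Finite G]
    (H : AddSubgroup G) (h : Nat.card G < 2 * Nat.card H) : H = ⊤ := by
  by_contra hH
  have := H.card_mul_index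
  have := H.one_lt_index_of_ne_top hH
  nlinarith

theorem AddMonoidHom.eq_of_eqOn_of_card_lt {G M : Type*} [AddGroup G] [Finite G] [AddMonoid M]
    {f g : G →+ M} {s : Set G} (h : Set.EqOn f g s) (hs : Nat.card G < 2 * s.ncard) :
    f = g := by
  have hle : s.ncard ≤ Nat.card (f.eqLocus g) := by
    rw [← Nat.card_coe_set_eq]
    exact Set.ncard_le_ncard (t := (f.eqLocus g : Set G)) h
  have htop := (f.eqLocus g).eq_top_of_card_lt_two_mul_card (by omega)
  exact AddMonoidHom.ext fun x => (htop ▸ AddSubgroup.mem_top x : x ∈ f.eqLocus g)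

section cyclotomicClass

variable {G : Type*} [Group G] (ω : G) (d : ℕ)

/-- For a generator `ω` of `G` this is the cyclotomic class `C_r = ω^r ⟨ω^d⟩`. -/
def cyclotomicClass (r : ZMod d) : Set G := {x | ∃ e : ℤ, ω ^ e = x ∧ (e : ZMod d) = r}

variable {ω d}

theorem zpow_mem_cyclotomicClass_iff (hd : d ∣ orderOf ω) {e : ℤ} {r : ZMod d} :
    ω ^ e ∈ cyclotomicClass ω d r ↔ (e : ZMod d) = r := by
  refine ⟨?_, fun he => ⟨e, rfl, he⟩⟩
  rintro ⟨e', he', rfl⟩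
  rw [ZMod.intCast_eq_intCast_iff]
  exact ((zpow_eq_zpow_iff_modEq.mp he').of_dvd (Int.natCast_dvd_natCast.mpr hd)).symm

theorem disjoint_cyclotomicClass (hd : d ∣ orderOf ω) {r s : ZMod d} (hrs : r ≠ s) :
    Disjoint (cyclotomicClass ω d r) (cyclotomicClass ω d s) := by
  refine Set.disjoint_left.mpr ?_
  rintro _ ⟨e, rfl, rfl⟩ hs
  exact hrs ((zpow_mem_cyclotomicClass_iff hd).mp hs)

theorem image_mul_left_cyclotomicClass_subset (r : ZMod d) :
    (ω * ·) '' cyclotomicClass ω d r ⊆ cyclotomicClass ω d (r + 1) := by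
  rintro _ ⟨_, ⟨e, rfl, rfl⟩, rfl⟩
  exact ⟨e + 1, by rw [add_comm, zpow_one_add], by push_cast; rfl⟩

theorem two_mul_ncard_cyclotomicClass_le [Finite G] (hd : d ∣ orderOf ω) (h1 : 1 < d)
    (r : ZMod d) :
    2 * (cyclotomicClass ω d r).ncard ≤ Nat.card G := by
  have : Fact (1 < d) := ⟨h1⟩
  have hdisj : Disjoint (cyclotomicClass ω d r) ((ω * ·) '' cyclotomicClass ω d r) :=
    (disjoint_cyclotomicClass hd (by simp)).mono_right (image_mul_left_cyclotomicClass_subset r)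
  calc 2 * (cyclotomicClass ω d r).ncard
      = (cyclotomicClass ω d r).ncard + ((ω * ·) '' cyclotomicClass ω d r).ncard := by
        rw [Set.ncard_image_of_injective _ (mul_right_injective ω)]; ring
    _ = (cyclotomicClass ω d r ∪ (ω * ·) '' cyclotomicClass ω d r).ncard :=
        (Set.ncard_union_eq hdisj).symm
    _ ≤ Nat.card G := Set.ncard_le_card _

end cyclotomicClass

theorem stmt10_general {F : Type*} [Field F] [Fintype F]
    (d : ℕ) (hd : 1 < d) (hdvd : d ∣ Fintype.card F - 1)
    (ω : Fˣ) (hω : ∀ x : Fˣ, x ∈ Subgroup.zpowers ω)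
    (o : ℕ)
    (f : F → F) (hf0 : f 0 = 0)
    (hf1 : ∀ e : ℤ, (e : ZMod d) ≠ ((d - 1 : ℕ) : ZMod d) →
      f ((ω ^ e : Fˣ) : F) = (ω : F) * ((ω ^ e : Fˣ) : F))
    (hf2 : ∀ e : ℤ, (e : ZMod d) = ((d - 1 : ℕ) : ZMod d) →
      f ((ω ^ e : Fˣ) : F) = ((ω ^ o : Fˣ) : F) * ((ω ^ e : Fˣ) : F))
    (hoo : ω ^ o ≠ ω) :
    ¬ (∀ x y : F, f (x + y) = f x + f y) := by
  intro hadd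
  set C : Set F := Units.val '' cyclotomicClass ω d ((d - 1 : ℕ) : ZMod d)
  have hord : orderOf ω = Nat.card F - 1 := by
    rw [orderOf_eq_card_of_forall_mem_zpowers hω, Nat.card_units]
  have hdω : d ∣ orderOf ω := by rwa [hord, Nat.card_eq_fintype_card]
  have hagree : Set.EqOn (AddMonoidHom.mk' f hadd) (AddMonoidHom.mulLeft (ω : F)) Cᶜ := by
    intro x hx
    rcases eq_or_ne x 0 with rfl | hx0
    · simp [hf0]
    obtain ⟨e, he⟩ := Subgroup.mem_zpowers_iff.mp (hω (Units.mk0 x hx0))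
    have hxe : ((ω ^ e : Fˣ) : F) = x := by rw [he, Units.val_mk0]
    have hne : (e : ZMod d) ≠ ((d - 1 : ℕ) : ZMod d) := fun hmem =>
      hx ⟨ω ^ e, (zpow_mem_cyclotomicClass_iff hdω).mpr hmem, hxe⟩
    simpa [hxe] using hf1 e hne
  have hcard : Nat.card F < 2 * Cᶜ.ncard := by
    have hC := two_mul_ncard_cyclotomicClass_le hdω hd ((d - 1 : ℕ) : ZMod d)
    rw [Nat.card_units] at hC
    rw [Set.ncard_compl, Set.ncard_image_of_injective _ Units.val_injective]
    have : 0 < Nat.card F := Nat.card_pos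
    omega
  have hfω := DFunLike.congr_fun (AddMonoidHom.eq_of_eqOn_of_card_lt hagree hcard)
    ((ω ^ ((d - 1 : ℕ) : ℤ) : Fˣ) : F)
  have hf2' := hf2 ((d - 1 : ℕ) : ℤ) (Int.cast_natCast _)
  simp only [AddMonoidHom.mk'_apply, AddMonoidHom.coe_mulLeft] at hfω
  exact hoo (Units.ext (mul_right_cancel₀ (Units.ne_zero _) (hf2'.symm.trans hfω)))

/-- With `d > 1` dividing `q - 1`, `ω` a primitive root of `F_q` and `o` positive, the
first-order cyclotomic map `f` (with `f 0 = 0`, `f x = ω x` off `C_{d-1}`, and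
`f x = ω^o x` on `C_{d-1}`) is not additive, provided `ω^o ≠ ω`. -/
theorem stmt10 {F : Type*} [Field F] [Fintype F] [DecidableEq F]
    (p : ℕ) [CharP F p]
    (d : ℕ) (hd : 1 < d) [NeZero d] (hdvd : d ∣ Fintype.card F - 1)
    (ω : Fˣ) (hω : ∀ x : Fˣ, x ∈ Subgroup.zpowers ω)
    (o : ℕ) (ho : 0 < o)
    (f : F → F) (hf0 : f 0 = 0)
    (hf1 : ∀ e : ℤ, (e : ZMod d) ≠ ((d - 1 : ℕ) : ZMod d) →
      f ((ω ^ e : Fˣ) : F) = (ω : F) * ((ω ^ e : Fˣ) : F))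
    (hf2 : ∀ e : ℤ, (e : ZMod d) = ((d - 1 : ℕ) : ZMod d) →
      f ((ω ^ e : Fˣ) : F) = ((ω ^ o : Fˣ) : F) * ((ω ^ e : Fˣ) : F))
    (hoo : ω ^ o ≠ ω) :
    ¬ (∀ x y : F, f (x + y) = f x + f y) :=
  stmt10_general d hd hdvd ω hω o f hf0 hf1 hf2 hoo
end

section
/- Let d, d_1, ..., d_r be positive integers with each d_i | d. Then the constant c := (1/d^r) · Π_{i=1}^{r} Σ_{z | d} μ(z/gcd(z, d_i))^2 φ(z) / φ(z/gcd(z, d_i))^2 satisfies 1/d^r ≤ c ≤ 1. -/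
/-! Each factor of the product lies in `[1, d]`: the divisor `z = 1` contributes `1`, and every
term is at most `φ(z)` because `μ² ≤ 1` and `φ ≥ 1` on positive integers, so the sum is at most
`∑_{z ∣ d} φ(z) = d`. -/

open ArithmeticFunction
open scoped ArithmeticFunction.Moebius

def divisorFactor (d e : ℕ) : ℚ :=
  ∑ z ∈ d.divisors, ((μ (z / Nat.gcd z e) : ℚ) ^ 2 * (Nat.totient z : ℚ)
    / (Nat.totient (z / Nat.gcd z e) : ℚ) ^ 2)

lemma moebius_sq_le_one_rat (n : ℕ) : (μ n : ℚ) ^ 2 ≤ 1 := by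
  exact_mod_cast (sq_le_one_iff_abs_le_one (μ n)).2 abs_moebius_le_one

-- At `w = 0` the junk value `φ 0 = 0` makes the left side `0`.
lemma moebius_sq_mul_totient_div_totient_sq_le (n w : ℕ) :
    (μ w : ℚ) ^ 2 * Nat.totient n / (Nat.totient w : ℚ) ^ 2 ≤ Nat.totient n := by
  rcases Nat.eq_zero_or_pos (Nat.totient w) with hw | hw
  · simp [hw]
  have hw1 : (1 : ℚ) ≤ (Nat.totient w : ℚ) ^ 2 := one_le_pow₀ (by exact_mod_cast hw)
  calc (μ w : ℚ) ^ 2 * Nat.totient n / (Nat.totient w : ℚ) ^ 2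
      ≤ (μ w : ℚ) ^ 2 * Nat.totient n := div_le_self (by positivity) hw1
    _ ≤ Nat.totient n := mul_le_of_le_one_left (by positivity) (moebius_sq_le_one_rat w)

lemma one_le_divisorFactor {d : ℕ} (hd : d ≠ 0) (e : ℕ) : 1 ≤ divisorFactor d e := by
  have hterm := Finset.single_le_sum (f := fun z => (μ (z / Nat.gcd z e) : ℚ) ^ 2 *
      (Nat.totient z : ℚ) / (Nat.totient (z / Nat.gcd z e) : ℚ) ^ 2)
    (fun z _ => by positivity) (Nat.one_mem_divisors.2 hd)
  simpa [divisorFactor] using hterm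

lemma divisorFactor_le (d e : ℕ) : divisorFactor d e ≤ d := by
  calc divisorFactor d e ≤ ∑ z ∈ d.divisors, (Nat.totient z : ℚ) :=
        Finset.sum_le_sum fun z _ => moebius_sq_mul_totient_div_totient_sq_le z _
    _ = d := by exact_mod_cast Nat.sum_totient d

theorem stmt13_general (r d : ℕ) (hd : 0 < d) (di : Fin r → ℕ) :
    1 / (d : ℚ) ^ r ≤ (1 / (d : ℚ) ^ r) * ∏ i : Fin r, ∑ z ∈ d.divisors,
        ((μ (z / Nat.gcd z (di i)) : ℚ) ^ 2 * (Nat.totient z : ℚ)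
          / (Nat.totient (z / Nat.gcd z (di i)) : ℚ) ^ 2)
    ∧ (1 / (d : ℚ) ^ r) * ∏ i : Fin r, ∑ z ∈ d.divisors,
        ((μ (z / Nat.gcd z (di i)) : ℚ) ^ 2 * (Nat.totient z : ℚ)
          / (Nat.totient (z / Nat.gcd z (di i)) : ℚ) ^ 2)
      ≤ 1 := by
  change 1 / (d : ℚ) ^ r ≤ 1 / (d : ℚ) ^ r * ∏ i, divisorFactor d (di i) ∧
    1 / (d : ℚ) ^ r * ∏ i, divisorFactor d (di i) ≤ 1
  have hpos : (0 : ℚ) < (d : ℚ) ^ r := by positivity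
  have hlow : 1 ≤ ∏ i, divisorFactor d (di i) :=
    Finset.one_le_prod fun i _ => one_le_divisorFactor hd.ne' (di i)
  have hup : ∏ i, divisorFactor d (di i) ≤ (d : ℚ) ^ r := by
    simpa using Finset.prod_le_prod (s := Finset.univ)
      (fun i _ => zero_le_one.trans (one_le_divisorFactor hd.ne' (di i)))
      fun i _ => divisorFactor_le d (di i)
  rw [div_mul_eq_mul_div, one_mul, div_le_div_iff_of_pos_right hpos, div_le_one hpos]
  exact ⟨hlow, hup⟩

/-- For positive integers `d_1, …, d_r` dividing `d`, the constant
`c = (1/d^r) ∏_{i=1}^{r} ∑_{z ∣ d} μ(z/gcd(z,d_i))² φ(z) / φ(z/gcd(z,d_i))²`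
satisfies `1/d^r ≤ c ≤ 1`. -/
theorem stmt13 (r d : ℕ) (hd : 0 < d) (di : Fin r → ℕ)
    (hdi : ∀ i, 0 < di i) (hdvd : ∀ i, di i ∣ d) :
    1 / (d : ℚ) ^ r ≤ (1 / (d : ℚ) ^ r) * ∏ i : Fin r, ∑ z ∈ d.divisors,
        ((μ (z / Nat.gcd z (di i)) : ℚ) ^ 2 * (Nat.totient z : ℚ)
          / (Nat.totient (z / Nat.gcd z (di i)) : ℚ) ^ 2)
    ∧ (1 / (d : ℚ) ^ r) * ∏ i : Fin r, ∑ z ∈ d.divisors,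
        ((μ (z / Nat.gcd z (di i)) : ℚ) ^ 2 * (Nat.totient z : ℚ)
          / (Nat.totient (z / Nat.gcd z (di i)) : ℚ) ^ 2)
      ≤ 1 :=
  stmt13_general r d hd di
end

section
/- Let q be a prime power with q ≡ 1 (mod d), ω a primitive root of F_q, C the index-d subgroup of F_q^*, and let ψ ∈ Sym({0,...,d−1}). Suppose h assigns to each cycle ζ of ψ a positive integer h(ζ) such that d·h(ζ) divides q − 1. Then there exists an index-d first-order cyclotomic permutation f of F_q such that f(ω^i C) = ω^{ψ(i)} C for all i, and for each cycle ζ of ψ, the product π(ζ) = Π_{i ∈ supp(ζ)} a_i of the multiplier constants of f along ζ has multiplicative order (q−1)/(d·h(ζ)). -/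
/-!
Write `a_i = ω ^ k_i`. Multiplication by `a_i` maps the coset `ω^i C` onto `ω^{ψ i} C` exactly
when `k_i ≡ ψ i - i (mod d)`, and the cycle product `π(ζ) = ω ^ (∑_{i ∈ ζ} k_i)` has order
`(q - 1) / gcd(q - 1, ∑_{i ∈ ζ} k_i)`. So it suffices to choose integers `k_i ≡ ψ i - i` with
`∑_{i ∈ ζ} k_i = d·h(ζ)`. The residues `ψ i - i` sum to `0` along every cycle, so this is achieved
by shifting `k` at one representative of each cycle by a multiple of `d`.
-/

open Finset

theorem Finset.prod_zpow_eq_zpow_sum {ι G : Type*} [CommGroup G] (s : Finset ι) (f : ι → ℤ)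
    (g : G) : ∏ i ∈ s, g ^ f i = g ^ ∑ i ∈ s, f i := by
  induction s using Finset.cons_induction with
  | empty => simp
  | cons i s hi ih => rw [prod_cons, sum_cons, ih, zpow_add]

namespace Equiv.Perm

variable {α : Type*} [Fintype α] [DecidableEq α]

theorem sum_sameCycle_comp {M : Type*} [AddCommMonoid M] (ψ : Perm α) (g : α → M) (i : α) :
    ∑ j ∈ {j | ψ.SameCycle i j}, g (ψ j) = ∑ j ∈ {j | ψ.SameCycle i j}, g j :=
  sum_equiv ψ (by simp [sameCycle_apply_right]) (fun _ _ => rfl)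

theorem exists_modEq_sum_sameCycle_eq (ψ : Perm α) (n : ℤ) (b T : α → ℤ)
    (hT : ∀ i j, ψ.SameCycle i j → T i = T j)
    (hdvd : ∀ i, n ∣ T i - ∑ j ∈ {j | ψ.SameCycle i j}, b j) :
    ∃ k : α → ℤ, (∀ j, k j ≡ b j [ZMOD n]) ∧
      ∀ i, ∑ j ∈ {j | ψ.SameCycle i j}, k j = T i := by
  let r : α → α := fun i => (Quotient.mk (SameCycle.setoid ψ) i).out
  have hr : ∀ i, ψ.SameCycle i (r i) := fun i =>
    (Quotient.mk_out (s := SameCycle.setoid ψ) i).symm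
  have hr_eq : ∀ i j, ψ.SameCycle i j → r i = r j := fun i j hij =>
    congrArg Quotient.out (Quotient.sound (s := SameCycle.setoid ψ) hij)
  have hclass : ∀ i j, ψ.SameCycle i j →
      ({u | ψ.SameCycle i u} : Finset α) = ({u | ψ.SameCycle j u} : Finset α) := by
    intro i j hij
    ext u
    simp only [mem_filter, mem_univ, true_and]
    exact ⟨hij.symm.trans, hij.trans⟩
  -- the correction `T - ∑ b` is carried by the representative `r i` of each cycle
  refine ⟨fun j => b j + if j = r j then T j - ∑ u ∈ {u | ψ.SameCycle j u}, b u else 0,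
    fun j => ?_, fun i => ?_⟩
  · dsimp only
    split_ifs
    · exact Int.modEq_iff_dvd.mpr (by rw [sub_add_cancel_left]; exact (hdvd j).neg_right)
    · rw [add_zero]
  · have hcorr : ∀ j ∈ ({u | ψ.SameCycle i u} : Finset α),
        (if j = r j then T j - ∑ u ∈ {u | ψ.SameCycle j u}, b u else 0) =
          if j = r i then T j - ∑ u ∈ {u | ψ.SameCycle j u}, b u else 0 := fun j hj => by
      rw [hr_eq i j (mem_filter.mp hj).2]
    rw [sum_add_distrib, sum_congr rfl hcorr, sum_ite_eq',
      if_pos (mem_filter.mpr ⟨mem_univ _, hr i⟩), ← hT i (r i) (hr i),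
      ← hclass i (r i) (hr i), add_sub_cancel]

theorem exists_intCast_eq_sub_sum_sameCycle_eq {n : ℕ} [NeZero n] (ψ : Perm (ZMod n))
    (T : ZMod n → ℤ) (hT : ∀ i j, ψ.SameCycle i j → T i = T j) (hn : ∀ i, (n : ℤ) ∣ T i) :
    ∃ k : ZMod n → ℤ, (∀ j, (k j : ZMod n) = ψ j - j) ∧
      ∀ i, ∑ j ∈ {j | ψ.SameCycle i j}, k j = T i := by
  have hsum : ∀ i, ∑ j ∈ {j | ψ.SameCycle i j}, (((ψ j).val : ℤ) - j.val) = 0 := fun i => by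
    rw [sum_sub_distrib, sum_sameCycle_comp ψ (fun j => (j.val : ℤ)), sub_self]
  obtain ⟨k, hk_mod, hk_sum⟩ := ψ.exists_modEq_sum_sameCycle_eq n
    (fun j => (ψ j).val - j.val) T hT (fun i => by rw [hsum, sub_zero]; exact hn i)
  refine ⟨k, fun j => ?_, hk_sum⟩
  rw [(ZMod.intCast_eq_intCast_iff _ _ n).mpr (hk_mod j)]
  push_cast [ZMod.natCast_val, ZMod.cast_id]
  rfl

end Equiv.Perm

section

variable {G A : Type*} [Group G] [AddGroup A] (χ : G →* Multiplicative A)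

/-- The first-order cyclotomic map `u ↦ a_{χ u} u` with respect to the coset index `χ`; by `ha`
it sends the coset with index `x` onto the coset with index `ψ x`. -/
def cyclotomicPerm (ψ : Equiv.Perm A) (a : A → G) (ha : ∀ x, (χ (a x)).toAdd + x = ψ x) :
    Equiv.Perm G where
  toFun u := a (χ u).toAdd * u
  invFun v := (a (ψ.symm (χ v).toAdd))⁻¹ * v
  left_inv u := by
    dsimp only
    rw [map_mul, toAdd_mul, ha, ψ.symm_apply_apply, inv_mul_cancel_left]
  right_inv v := by
    set y := ψ.symm (χ v).toAdd
    have hy : (χ ((a y)⁻¹ * v)).toAdd = y := by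
      rw [map_mul, map_inv, toAdd_mul, toAdd_inv, ← ψ.apply_symm_apply (χ v).toAdd, ← ha y,
        neg_add_cancel_left]
    dsimp only
    rw [hy, mul_inv_cancel_left]

@[simp]
theorem cyclotomicPerm_apply {ψ : Equiv.Perm A} {a : A → G}
    (ha : ∀ x, (χ (a x)).toAdd + x = ψ x) (u : G) :
    cyclotomicPerm χ ψ a ha u = a (χ u).toAdd * u :=
  rfl

end

section

variable {G : Type*} [Group G] {g : G} (hg : ∀ x, x ∈ Subgroup.zpowers g) {n : ℕ}
  (hn : n ∣ orderOf g)

noncomputable def cosetIndex : G →* Multiplicative (ZMod n) :=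
  monoidHomOfForallMemZpowers hg (g' := Multiplicative.ofAdd 1)
    (by rwa [orderOf_ofAdd_eq_addOrderOf, ZMod.addOrderOf_one])

theorem toAdd_cosetIndex_zpow (e : ℤ) : (cosetIndex hg hn (g ^ e)).toAdd = e := by
  rw [map_zpow, cosetIndex, monoidHomOfForallMemZpowers_apply_gen, toAdd_zpow, toAdd_ofAdd,
    zsmul_one]

end

namespace Equiv.Perm

variable {G₀ : Type*} [GroupWithZero G₀] [DecidableEq G₀]

def extendUnits (σ : Perm G₀ˣ) : Perm G₀ :=
  ofSubtype (unitsEquivNeZero.permCongr σ)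

@[simp]
theorem extendUnits_zero (σ : Perm G₀ˣ) : extendUnits σ 0 = 0 :=
  ofSubtype_apply_of_not_mem _ (not_not.mpr rfl)

@[simp]
theorem extendUnits_coe (σ : Perm G₀ˣ) (u : G₀ˣ) : extendUnits σ u = σ u := by
  rw [extendUnits, ofSubtype_apply_of_mem (p := (· ≠ 0)) _ u.ne_zero]
  simp

end Equiv.Perm

theorem stmt16_general {F : Type*} [Field F] [Fintype F] [DecidableEq F]
    (d : ℕ) [NeZero d] (hdvd : d ∣ Fintype.card F - 1)
    (ω : Fˣ) (hω : ∀ x : Fˣ, x ∈ Subgroup.zpowers ω)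
    (ψ : Equiv.Perm (ZMod d))
    (h : ZMod d → ℕ) (hconst : ∀ i j : ZMod d, ψ.SameCycle i j → h i = h j)
    (hdiv : ∀ i, d * h i ∣ Fintype.card F - 1) :
    ∃ (a : ZMod d → Fˣ) (f : F → F),
      f 0 = 0
      ∧ (∀ e : ℤ, f ((ω ^ e : Fˣ) : F) = ((a ((e : ZMod d)) : F)) * ((ω ^ e : Fˣ) : F))
      ∧ Function.Bijective f
      ∧ (∀ e : ℤ, ∃ c : ℤ, f ((ω ^ e : Fˣ) : F) = ((ω ^ c : Fˣ) : F) ∧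
          (c : ZMod d) = ψ ((e : ZMod d)))
      ∧ (∀ i : ZMod d,
          orderOf (∏ j ∈ Finset.univ.filter (fun j => ψ.SameCycle i j), a j)
            = (Fintype.card F - 1) / (d * h i)) := by
  have hord : orderOf ω = Fintype.card F - 1 := by
    rw [orderOf_eq_card_of_forall_mem_zpowers hω, Nat.card_eq_fintype_card, Fintype.card_units]
  obtain ⟨k, hk_cast, hk_sum⟩ := ψ.exists_intCast_eq_sub_sum_sameCycle_eq
    (fun i => ((d * h i : ℕ) : ℤ)) (fun i j hij => by rw [hconst i j hij])
    (fun i => Int.natCast_dvd_natCast.mpr (dvd_mul_right _ _))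
  let χ := cosetIndex hω (hord ▸ hdvd)
  let a : ZMod d → Fˣ := fun j => ω ^ k j
  have ha : ∀ j, (χ (a j)).toAdd + j = ψ j := fun j => by
    rw [toAdd_cosetIndex_zpow, hk_cast, sub_add_cancel]
  let f := Equiv.Perm.extendUnits (cyclotomicPerm χ ψ a ha)
  have hf : ∀ e : ℤ, f (ω ^ e : Fˣ) = a e * (ω ^ e : Fˣ) := fun e => by
    rw [Equiv.Perm.extendUnits_coe, cyclotomicPerm_apply, toAdd_cosetIndex_zpow, Units.val_mul]
  refine ⟨a, f, Equiv.Perm.extendUnits_zero _, hf, f.bijective, fun e => ⟨k e + e, ?_, ?_⟩,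
    fun i => ?_⟩
  · rw [hf, zpow_add, Units.val_mul]
  · push_cast
    rw [hk_cast, sub_add_cancel]
  · rw [prod_zpow_eq_zpow_sum, hk_sum, zpow_natCast, orderOf_pow, hord,
      Nat.gcd_eq_right (hdiv i)]

/-- Given `q ≡ 1 (mod d)`, a primitive root `ω` of `F_q`, a permutation `ψ` of the
coset indices `{0, …, d-1}` and a function `h` assigning to each cycle of `ψ` a
positive integer with `d·h(ζ) ∣ q - 1`, there exists an index-`d` first-order
cyclotomic permutation `f` of `F_q` inducing `ψ` on the cosets of the index-`d`
subgroup `C` whose cycle products `π(ζ)` have multiplicative order `(q-1)/(d·h(ζ))`. -/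
theorem stmt16 {F : Type*} [Field F] [Fintype F] [DecidableEq F]
    (d : ℕ) [NeZero d] (hdvd : d ∣ Fintype.card F - 1)
    (ω : Fˣ) (hω : ∀ x : Fˣ, x ∈ Subgroup.zpowers ω)
    (ψ : Equiv.Perm (ZMod d))
    (h : ZMod d → ℕ) (hconst : ∀ i j : ZMod d, ψ.SameCycle i j → h i = h j)
    (hpos : ∀ i, 0 < h i) (hdiv : ∀ i, d * h i ∣ Fintype.card F - 1) :
    ∃ (a : ZMod d → Fˣ) (f : F → F),
      f 0 = 0
      ∧ (∀ e : ℤ, f ((ω ^ e : Fˣ) : F) = ((a ((e : ZMod d)) : F)) * ((ω ^ e : Fˣ) : F))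
      ∧ Function.Bijective f
      ∧ (∀ e : ℤ, ∃ c : ℤ, f ((ω ^ e : Fˣ) : F) = ((ω ^ c : Fˣ) : F) ∧
          (c : ZMod d) = ψ ((e : ZMod d)))
      ∧ (∀ i : ZMod d,
          orderOf (∏ j ∈ Finset.univ.filter (fun j => ψ.SameCycle i j), a j)
            = (Fintype.card F - 1) / (d * h i)) :=
  stmt16_general d hdvd ω hω ψ h hconst hdiv
end
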